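/- (3/2-approximation of good swap edges) Let e be a failing edge of an SPT T, let g = (x,y) be a swap edge for e minimizing d_T(s,x') + w(x',v') over all swap edges (x',v') for e, and let f be a swap edge minimizing μ. Then μ(g) ≤ (3/2)·μ(f). -/

import Mathlib

open SimpleGraph

/-- The weighted length of a walk. -/
noncomputable def wlen {V : Type*} (W : V → V → ℝ) {G : SimpleGraph V} {u v : V}
    (p : G.Walk u v) : ℝ :=
  (p.darts.map (fun d => W d.toProd.1 d.toProd.2)).sum

/-- The weighted distance between two vertices of a graph: the infimum of the
weighted lengths of all walks joining them. -/
noncomputable def wdist {V : Type*} (W : V → V → ℝ) (G : SimpleGraph V) (u v : V) : ℝ :=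
  sInf {x : ℝ | ∃ p : G.Walk u v, x = wlen W p}

/-- `(x, y)` is a swap edge for the failing tree edge `e = (a,b)` (with `b` the child):
a non-tree edge of `G` whose endpoint `x` lies in the component of `T − e` containing the
source and whose endpoint `y` lies in the detached component, i.e. the one containing `b`. -/
def swapEdge {V : Type*} (T G : SimpleGraph V) (a b x y : V) : Prop :=
  G.Adj x y ∧ s(x, y) ∉ T.edgeSet ∧
    ¬ (T.deleteEdges {s(a, b)}).Reachable b x ∧
    (T.deleteEdges {s(a, b)}).Reachable b y

/-- The max-stretch `μ` of a swap edge `(x, y)` for the failing edge `e = (a,b)`: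
the supremum over the vertices `u` of the detached subtree `T_b` of
`d_{T_{e/f}}(s,u) / d_{G−e}(s,u)`, where `d_{T_{e/f}}(s,u) = d_T(s,x) + w(x,y) + d_T(y,u)`. -/
noncomputable def muSt {V : Type*} (W : V → V → ℝ) (T G : SimpleGraph V)
    (s a b x y : V) : ℝ :=
  sSup {r : ℝ | ∃ u : V, (T.deleteEdges {s(a, b)}).Reachable b u ∧
    r = (wdist W T s x + W x y + wdist W T y u) /
        wdist W (G.deleteEdges {s(a, b)}) s u}

/-!
Write `L = d_T(s,x) + w(x,y)`, `D(u) = d_{G−e}(s,u)` and `μ = μ(f)`. A walk of `G − e` from `s`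
into `T_b` leaves the side of `s` through a swap edge, so `L ≤ D(u)` on `T_b` by the choice
of `g`. Since `D(u)` is at most the length of the walk through any swap edge, `μ ≥ 1` and
`D(y) ≤ L`. For `u ∈ T_b`, going from `y` to `u` through `s` gives `L + d_T(y,u) ≤ 2L + D(u)`;
going through `y'` and using the stretch of `f` at `y` and at `u` gives
`L + d_T(y,u) ≤ (μ - 1)L + μ D(u)`. The first bound suffices when `μ ≥ 2`, the second
(with `L ≤ D(u)`) when `μ ≤ 2`.
-/

section WeightedDistance

variable {V : Type*} {W : V → V → ℝ} {G H : SimpleGraph V} {u v w : V}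

@[simp]
lemma wlen_nil : wlen W (Walk.nil : G.Walk u u) = 0 := by
  simp [wlen]

@[simp]
lemma wlen_cons (h : G.Adj u v) (p : G.Walk v w) :
    wlen W (Walk.cons h p) = W u v + wlen W p := by
  simp [wlen]

lemma wlen_append (p : G.Walk u v) (q : G.Walk v w) :
    wlen W (p.append q) = wlen W p + wlen W q := by
  simp [wlen, Walk.darts_append]

@[simp]
lemma wlen_transfer (p : G.Walk u v) (hp : ∀ e ∈ p.edges, e ∈ H.edgeSet) :
    wlen W (p.transfer H hp) = wlen W p := by
  induction p with
  | nil => rfl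
  | cons h p ih => exact (wlen_cons _ _).trans (congrArg (W _ _ + ·) (ih _))

lemma wlen_reverse (hWs : ∀ u v, W u v = W v u) (p : G.Walk u v) :
    wlen W p.reverse = wlen W p := by
  simp only [wlen, Walk.darts_reverse, List.map_reverse, List.sum_reverse, List.map_map]
  exact congrArg List.sum (List.map_congr_left fun d _ => hWs _ _)

lemma wlen_nonneg (hW : ∀ u v, G.Adj u v → 0 ≤ W u v) (p : G.Walk u v) : 0 ≤ wlen W p :=
  List.sum_nonneg <| by
    simp only [List.mem_map]
    rintro _ ⟨d, -, rfl⟩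
    exact hW _ _ d.adj

lemma wlen_bypass_le [DecidableEq V] (hW : ∀ u v, G.Adj u v → 0 ≤ W u v) (p : G.Walk u v) :
    wlen W p.bypass ≤ wlen W p :=
  (p.darts_bypass_sublist_darts.map _).sum_le_sum <| by
    simp only [List.mem_map]
    rintro _ ⟨d, -, rfl⟩
    exact hW _ _ d.adj

lemma wdist_le_wlen (hW : ∀ u v, G.Adj u v → 0 ≤ W u v) (p : G.Walk u v) :
    wdist W G u v ≤ wlen W p :=
  csInf_le ⟨0, by rintro _ ⟨q, rfl⟩; exact wlen_nonneg hW q⟩ ⟨p, rfl⟩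

lemma wdist_le_wlen_of_edges_subset (hW : ∀ u v, H.Adj u v → 0 ≤ W u v) (p : G.Walk u v)
    (hp : ∀ e ∈ p.edges, e ∈ H.edgeSet) : wdist W H u v ≤ wlen W p :=
  (wdist_le_wlen hW (p.transfer H hp)).trans_eq (wlen_transfer p hp)

lemma le_wdist {c : ℝ} (h : G.Reachable u v) (hc : ∀ p : G.Walk u v, c ≤ wlen W p) :
    c ≤ wdist W G u v :=
  le_csInf (h.elim fun p => ⟨_, p, rfl⟩) (by rintro _ ⟨p, rfl⟩; exact hc p)

lemma wdist_nonneg (hW : ∀ u v, G.Adj u v → 0 ≤ W u v) (h : G.Reachable u v) :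
    0 ≤ wdist W G u v :=
  le_wdist h (wlen_nonneg hW)

lemma wdist_self (hW : ∀ u v, G.Adj u v → 0 ≤ W u v) : wdist W G u u = 0 :=
  le_antisymm (by simpa using wdist_le_wlen hW (Walk.nil : G.Walk u u))
    (wdist_nonneg hW .rfl)

lemma wdist_comm (hWs : ∀ u v, W u v = W v u) : wdist W G u v = wdist W G v u := by
  unfold wdist
  congr 1
  ext r
  constructor <;> rintro ⟨p, rfl⟩ <;> exact ⟨p.reverse, (wlen_reverse hWs p).symm⟩

lemma wdist_le_of_adj (hW : ∀ u v, G.Adj u v → 0 ≤ W u v) (h : G.Adj u v) :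
    wdist W G u v ≤ W u v := by
  simpa using wdist_le_wlen hW (Walk.cons h Walk.nil)

lemma wdist_le_wdist_of_le (hGH : G ≤ H) (hW : ∀ u v, H.Adj u v → 0 ≤ W u v)
    (h : G.Reachable u v) : wdist W H u v ≤ wdist W G u v :=
  le_wdist h fun p =>
    wdist_le_wlen_of_edges_subset hW p fun _ he => edgeSet_mono hGH (p.edges_subset_edgeSet he)

variable [Fintype V]

lemma exists_isPath_wlen_eq_wdist (hW : ∀ u v, G.Adj u v → 0 ≤ W u v) (h : G.Reachable u v) :
    ∃ p : G.Walk u v, p.IsPath ∧ wlen W p = wdist W G u v := by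
  classical
  obtain ⟨p₀, -, hp₀⟩ := Finset.exists_min_image Finset.univ (fun p : G.Path u v => wlen W p.1)
    (h.elim fun q => ⟨⟨q.bypass, q.bypass_isPath⟩, Finset.mem_univ _⟩)
  refine ⟨p₀.1, p₀.2, le_antisymm ?_ (wdist_le_wlen hW _)⟩
  exact le_wdist h fun q =>
    (hp₀ ⟨q.bypass, q.bypass_isPath⟩ (Finset.mem_univ _)).trans (wlen_bypass_le hW q)

lemma wdist_triangle (hW : ∀ u v, G.Adj u v → 0 ≤ W u v) (huv : G.Reachable u v)
    (hvw : G.Reachable v w) : wdist W G u w ≤ wdist W G u v + wdist W G v w := by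
  obtain ⟨p, -, hp⟩ := exists_isPath_wlen_eq_wdist hW huv
  obtain ⟨q, -, hq⟩ := exists_isPath_wlen_eq_wdist hW hvw
  rw [← hp, ← hq, ← wlen_append]
  exact wdist_le_wlen hW _

end WeightedDistance

section Bridge

variable {V : Type*} [Fintype V] {W : V → V → ℝ} {G H : SimpleGraph V} {a b u v : V}

lemma wdist_le_wdist_of_not_reachable_deleteEdges (hW : ∀ u v, G.Adj u v → 0 ≤ W u v)
    (hWH : ∀ u v, H.Adj u v → 0 ≤ W u v) (hGH : G.deleteEdges {s(a, b)} ≤ H)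
    (hu : ¬ (G.deleteEdges {s(a, b)}).Reachable u b)
    (hv : ¬ (G.deleteEdges {s(a, b)}).Reachable v b) (huv : G.Reachable u v) :
    wdist W H u v ≤ wdist W G u v := by
  obtain ⟨p, hp, hlen⟩ := exists_isPath_wlen_eq_wdist hW huv
  have hpe : s(a, b) ∉ p.edges := hp.isTrail.not_mem_edges_of_not_reachable hu hv
  rw [← hlen]
  refine wdist_le_wlen_of_edges_subset hWH p fun e he => edgeSet_mono hGH ?_
  rw [edgeSet_deleteEdges]
  exact ⟨p.edges_subset_edgeSet he, fun h => hpe (Set.mem_singleton_iff.1 h ▸ he)⟩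

lemma wdist_le_wdist_of_same_side (hW : ∀ u v, G.Adj u v → 0 ≤ W u v)
    (hWH : ∀ u v, H.Adj u v → 0 ≤ W u v) (hGH : G.deleteEdges {s(a, b)} ≤ H)
    (hab : ¬ (G.deleteEdges {s(a, b)}).Reachable a b)
    (hside : (G.deleteEdges {s(a, b)}).Reachable u b ↔ (G.deleteEdges {s(a, b)}).Reachable v b)
    (huv : G.Reachable u v) : wdist W H u v ≤ wdist W G u v := by
  by_cases hub : (G.deleteEdges {s(a, b)}).Reachable u b
  · have hswap : s(a, b) = s(b, a) := Sym2.eq_swap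
    have hua : ¬ (G.deleteEdges {s(a, b)}).Reachable u a := fun h => hab (h.symm.trans hub)
    have hva : ¬ (G.deleteEdges {s(a, b)}).Reachable v a :=
      fun h => hab (h.symm.trans (hside.1 hub))
    rw [hswap] at hGH hua hva
    exact wdist_le_wdist_of_not_reachable_deleteEdges hW hWH hGH hua hva huv
  · exact wdist_le_wdist_of_not_reachable_deleteEdges hW hWH hGH hub (hside.not.1 hub) huv

lemma le_wdist_of_forall_adj_cross (hW : ∀ u v, G.Adj u v → 0 ≤ W u v) (P : V → Prop)
    {L : ℝ} {s : V} (hcross : ∀ c v, G.Adj c v → ¬ P c → P v → L ≤ wdist W G s c + W c v)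
    (hs : ¬ P s) (hu : P u) (hsu : G.Reachable s u) : L ≤ wdist W G s u := by
  have key : ∀ c w (p : G.Walk c w), P w → G.Reachable s c → ¬ P c →
      L ≤ wdist W G s c + wlen W p := by
    intro c w p
    induction p with
    | nil => exact fun hw _ hc => absurd hw hc
    | @cons c v w hcv q ih =>
      intro hw hsc hc
      rw [wlen_cons]
      by_cases hv : P v
      · linarith [hcross c v hcv hc hv, wlen_nonneg hW q]
      · linarith [ih hw (hsc.trans hcv.reachable) hv, wdist_triangle hW hsc hcv.reachable,
          wdist_le_of_adj hW hcv]
  exact le_wdist hsu fun p => by simpa [wdist_self hW] using key s u p hu .rfl hs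

end Bridge

section SwapEdge

variable {V : Type*} {W : V → V → ℝ} {G T : SimpleGraph V} {s a b x y u : V}

lemma le_muSt [Finite V] (hu : (T.deleteEdges {s(a, b)}).Reachable b u) :
    (wdist W T s x + W x y + wdist W T y u) / wdist W (G.deleteEdges {s(a, b)}) s u ≤
      muSt W T G s a b x y := by
  refine le_csSup (Set.Finite.bddAbove ?_) ⟨u, hu, rfl⟩
  refine (Set.finite_range fun u => (wdist W T s x + W x y + wdist W T y u) /
    wdist W (G.deleteEdges {s(a, b)}) s u).subset ?_
  rintro _ ⟨u, -, rfl⟩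
  exact ⟨u, rfl⟩

lemma muSt_le {c : ℝ} (h : ∀ u, (T.deleteEdges {s(a, b)}).Reachable b u →
      (wdist W T s x + W x y + wdist W T y u) / wdist W (G.deleteEdges {s(a, b)}) s u ≤ c) :
    muSt W T G s a b x y ≤ c :=
  csSup_le ⟨_, b, .rfl, rfl⟩ (by rintro _ ⟨u, hu, rfl⟩; exact h u hu)

variable [Fintype V]

lemma wdist_deleteEdges_le_of_swapEdge (hW : ∀ u v, G.Adj u v → 0 ≤ W u v) (hTG : T ≤ G)
    (hT : T.IsTree) (he : s(a, b) ∈ T.edgeSet) (hGe : (G.deleteEdges {s(a, b)}).Connected)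
    (hb : ¬ (T.deleteEdges {s(a, b)}).Reachable s b) (hxy : swapEdge T G a b x y)
    (hu : (T.deleteEdges {s(a, b)}).Reachable b u) :
    wdist W (G.deleteEdges {s(a, b)}) s u ≤ wdist W T s x + W x y + wdist W T y u := by
  obtain ⟨hadj, hnT, hx, hy⟩ := hxy
  have hWT : ∀ u v, T.Adj u v → 0 ≤ W u v := fun u v h => hW u v (hTG h)
  have hWe : ∀ u v, (G.deleteEdges {s(a, b)}).Adj u v → 0 ≤ W u v :=
    fun u v h => hW u v (deleteEdges_le _ h)
  have hTe : T.deleteEdges {s(a, b)} ≤ G.deleteEdges {s(a, b)} := deleteEdges_mono hTG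
  have hab : ¬ (T.deleteEdges {s(a, b)}).Reachable a b :=
    isBridge_iff.1 (isAcyclic_iff_forall_adj_isBridge.1 hT.isAcyclic he)
  have hsx : wdist W (G.deleteEdges {s(a, b)}) s x ≤ wdist W T s x :=
    wdist_le_wdist_of_same_side hWT hWe hTe hab (iff_of_false hb fun h => hx h.symm)
      (hT.connected.preconnected s x)
  have hyu : wdist W (G.deleteEdges {s(a, b)}) y u ≤ wdist W T y u :=
    wdist_le_wdist_of_same_side hWT hWe hTe hab (iff_of_true hy.symm hu.symm)
      (hT.connected.preconnected y u)
  have hxy : (G.deleteEdges {s(a, b)}).Adj x y :=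
    deleteEdges_adj.2 ⟨hadj, fun h => hnT (Set.mem_singleton_iff.1 h ▸ he)⟩
  have hGe' := hGe.preconnected
  linarith [wdist_triangle hWe (hGe' s x) (hGe' x u), wdist_triangle hWe (hGe' x y) (hGe' y u),
    wdist_le_of_adj hWe hxy]

lemma le_wdist_deleteEdges_of_forall_swapEdge (hW : ∀ u v, G.Adj u v → 0 ≤ W u v)
    (hSPT : ∀ u, wdist W T s u = wdist W G s u) (hGe : (G.deleteEdges {s(a, b)}).Connected)
    (hb : ¬ (T.deleteEdges {s(a, b)}).Reachable s b)
    (hmin : ∀ x' y', swapEdge T G a b x' y' → wdist W T s x + W x y ≤ wdist W T s x' + W x' y')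
    (hu : (T.deleteEdges {s(a, b)}).Reachable b u) :
    wdist W T s x + W x y ≤ wdist W (G.deleteEdges {s(a, b)}) s u := by
  have hWe : ∀ u v, (G.deleteEdges {s(a, b)}).Adj u v → 0 ≤ W u v :=
    fun u v h => hW u v (deleteEdges_le _ h)
  refine le_wdist_of_forall_adj_cross hWe ((T.deleteEdges {s(a, b)}).Reachable b) ?_
    (fun h => hb h.symm) hu (hGe.preconnected s u)
  intro c v hcv hc hv
  obtain ⟨hGcv, hne⟩ := deleteEdges_adj.1 hcv
  have hnT : s(c, v) ∉ T.edgeSet :=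
    fun hT => hc (hv.trans (deleteEdges_adj.2 ⟨hT, hne⟩).symm.reachable)
  calc wdist W T s x + W x y ≤ wdist W T s c + W c v := hmin c v ⟨hGcv, hnT, hc, hv⟩
    _ ≤ wdist W (G.deleteEdges {s(a, b)}) s c + W c v := by
      rw [hSPT]
      gcongr
      exact wdist_le_wdist_of_le (deleteEdges_le _) hW (hGe.preconnected s c)

lemma wdist_le_add_wdist_deleteEdges (hW : ∀ u v, G.Adj u v → 0 ≤ W u v)
    (hWs : ∀ u v, W u v = W v u) (hTG : T ≤ G) (hT : T.Connected)
    (hSPT : ∀ u, wdist W T s u = wdist W G s u) (hxy : G.Adj x y) {e : Sym2 V}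
    (hu : (G.deleteEdges {e}).Reachable s u) :
    wdist W T y u ≤ wdist W T s x + W x y + wdist W (G.deleteEdges {e}) s u := by
  have hG : G.Connected := hT.mono hTG
  calc wdist W T y u ≤ wdist W T y s + wdist W T s u :=
        wdist_triangle (fun u v h => hW u v (hTG h)) (hT.preconnected y s) (hT.preconnected s u)
    _ = wdist W G s y + wdist W G s u := by rw [wdist_comm hWs, hSPT, hSPT]
    _ ≤ wdist W G s x + W x y + wdist W (G.deleteEdges {e}) s u := by
      gcongr
      · exact (wdist_triangle hW (hG.preconnected s x) hxy.reachable).trans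
          (add_le_add_right (wdist_le_of_adj hW hxy) _)
      · exact wdist_le_wdist_of_le (deleteEdges_le _) hW hu
    _ = wdist W T s x + W x y + wdist W (G.deleteEdges {e}) s u := by rw [hSPT]

end SwapEdge

lemma le_three_halves_mul_of_le_of_le {L D μ n : ℝ} (hLD : L ≤ D) (hμ : 1 ≤ μ)
    (h₁ : n ≤ 2 * L + D) (h₂ : n ≤ (μ - 1) * L + μ * D) : n ≤ 3 / 2 * μ * D := by
  rcases le_total μ 2 with hμ2 | hμ2
  · nlinarith [mul_le_mul_of_nonneg_left hLD (sub_nonneg.2 hμ)]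
  · nlinarith

theorem good_swap_edge_three_halves_approx_general {V : Type*} [Fintype V]
    (G T : SimpleGraph V) (W : V → V → ℝ) (s a b : V)
    (hWpos : ∀ u w : V, G.Adj u w → 0 < W u w)
    (hWsymm : ∀ u w : V, W u w = W w u)
    (h2ec : ∀ e' ∈ G.edgeSet, (G.deleteEdges {e'}).Connected)
    (hTG : T ≤ G) (hT : T.IsTree)
    (hSPT : ∀ u : V, wdist W T s u = wdist W G s u)
    (he : s(a, b) ∈ T.edgeSet)
    (hb : ¬ (T.deleteEdges {s(a, b)}).Reachable s b)
    (x y : V) (hg : swapEdge T G a b x y)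
    (hgmin : ∀ x' v' : V, swapEdge T G a b x' v' →
      wdist W T s x + W x y ≤ wdist W T s x' + W x' v')
    (x' y' : V) (hf : swapEdge T G a b x' y') :
    muSt W T G s a b x y ≤ (3 / 2) * muSt W T G s a b x' y' := by
  have hW : ∀ u w, G.Adj u w → 0 ≤ W u w := fun u w h => (hWpos u w h).le
  have hWT : ∀ u w, T.Adj u w → 0 ≤ W u w := fun u w h => hW u w (hTG h)
  have hGe := h2ec _ (edgeSet_mono hTG he)
  set L := wdist W T s x + W x y
  set μ := muSt W T G s a b x' y'
  set D := wdist W (G.deleteEdges {s(a, b)}) s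
  have hL : 0 < L := add_pos_of_nonneg_of_pos
    (wdist_nonneg hWT (hT.connected.preconnected s x)) (hWpos x y hg.1)
  have hLD : ∀ u, (T.deleteEdges {s(a, b)}).Reachable b u → L ≤ D u :=
    fun u hu => le_wdist_deleteEdges_of_forall_swapEdge hW hSPT hGe hb hgmin hu
  have hD : ∀ u, (T.deleteEdges {s(a, b)}).Reachable b u → 0 < D u :=
    fun u hu => hL.trans_le (hLD u hu)
  have hf_le : ∀ u, (T.deleteEdges {s(a, b)}).Reachable b u →
      wdist W T s x' + W x' y' + wdist W T y' u ≤ μ * D u :=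
    fun u hu => (div_le_iff₀ (hD u hu)).1 (le_muSt hu)
  have hμ : 1 ≤ μ := by
    refine le_of_mul_le_mul_right ?_ (hD b .rfl)
    linarith [hf_le b .rfl, wdist_deleteEdges_le_of_swapEdge hW hTG hT he hGe hb hf .rfl]
  have hDy : D y ≤ L := by
    simpa [wdist_self hWT] using
      wdist_deleteEdges_le_of_swapEdge hW hTG hT he hGe hb hg hg.2.2.2
  refine muSt_le fun u hu => (div_le_iff₀ (hD u hu)).2 <|
    le_three_halves_mul_of_le_of_le (hLD u hu) hμ ?_ ?_
  · linarith [wdist_le_add_wdist_deleteEdges hW hWsymm hTG hT.connected hSPT hg.1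
      (hGe.preconnected s u)]
  · linarith [hgmin x' y' hf, hf_le y hg.2.2.2, hf_le u hu,
      mul_le_mul_of_nonneg_left hDy (zero_le_one.trans hμ),
      wdist_comm hWsymm (G := T) (u := y) (v := y'),
      wdist_triangle hWT (hT.connected.preconnected y y') (hT.connected.preconnected y' u)]

/-- 3/2-approximation of good swap edges.  Let `e = (a,b)` be a failing edge of an SPT `T`
of a 2-edge-connected positively weighted graph `G`, let `g = (x,y)` be a swap edge for `e`
minimizing `d_T(s,x') + w(x',v')` over all swap edges `(x',v')` for `e`, and let
`f = (x',y')` be a swap edge minimizing the max-stretch `μ`.  Then `μ(g) ≤ (3/2)·μ(f)`. -/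
theorem good_swap_edge_three_halves_approx {V : Type*} [Fintype V]
    (G T : SimpleGraph V) (W : V → V → ℝ) (s a b : V)
    (hWpos : ∀ u w : V, G.Adj u w → 0 < W u w)
    (hWsymm : ∀ u w : V, W u w = W w u)
    (hGconn : G.Connected)
    (h2ec : ∀ e' ∈ G.edgeSet, (G.deleteEdges {e'}).Connected)
    (hTG : T ≤ G) (hT : T.IsTree)
    (hSPT : ∀ u : V, wdist W T s u = wdist W G s u)
    (he : s(a, b) ∈ T.edgeSet)
    (hb : ¬ (T.deleteEdges {s(a, b)}).Reachable s b)
    (x y : V) (hg : swapEdge T G a b x y)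
    (hgmin : ∀ x' v' : V, swapEdge T G a b x' v' →
      wdist W T s x + W x y ≤ wdist W T s x' + W x' v')
    (x' y' : V) (hf : swapEdge T G a b x' y')
    (hfmin : ∀ x'' v'' : V, swapEdge T G a b x'' v'' →
      muSt W T G s a b x' y' ≤ muSt W T G s a b x'' v'') :
    muSt W T G s a b x y ≤ (3 / 2) * muSt W T G s a b x' y' :=
  good_swap_edge_three_halves_approx_general G T W s a b hWpos hWsymm h2ec hTG hT hSPT he hb x y hg
    hgmin x' y' hf
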